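/- Let F be a distribution and n ≥ 1 with F^{*n} ∈ L ∩ OS. Suppose for some ε₀ > 0 the counting random variable τ with P(τ = k) = pₖ satisfies ∑_{m=1}^∞ (∑_{k=(m-1)n+1}^{mn} pₖ)(C*(F^{*n}) - 1 + ε₀)^m < ∞, where C*(G) = limsup_{x→∞} \overline{G^{*2}}(x)/\bar{G}(x). Then for every 0 < ε < 1 there exists M ≥ 2 such that ∑_{k=M}^∞ pₖ \overline{F^{*k}}(x) ≤ ε \overline{F^{*τ}}(x) for all x ≥ 0. -/

import Mathlib

open MeasureTheory Filter Set Asymptotics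

/-- Tail function of a distribution: `F̄(x) = μ(x, ∞)`. -/
noncomputable def tail (μ : Measure ℝ) (x : ℝ) : ℝ := (μ (Set.Ioi x)).toReal

/-- `F(a, b] = F(b) - F(a)`. -/
noncomputable def intv (μ : Measure ℝ) (a b : ℝ) : ℝ := (μ (Set.Ioc a b)).toReal

/-- A distribution is long-tailed if `F̄(x+1)/F̄(x) → 1` as `x → ∞`. -/
def LongTailed (μ : Measure ℝ) : Prop :=
  Tendsto (fun x => tail μ (x + 1) / tail μ x) atTop (nhds 1)

/-- Convolution of two distributions on ℝ (law of the sum of independent rvs). -/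
noncomputable def mconv (μ ν : Measure ℝ) : Measure ℝ :=
  Measure.map (fun p : ℝ × ℝ => p.1 + p.2) (μ.prod ν)

/-- `n`-fold convolution of a distribution with itself; `nconv μ 0` is the unit mass at 0. -/
noncomputable def nconv (μ : Measure ℝ) : ℕ → Measure ℝ
  | 0 => Measure.dirac 0
  | n + 1 => mconv (nconv μ n) μ

/-- The class OS of generalised subexponential distributions. -/
def OSClass (μ : Measure ℝ) : Prop :=
  (∀ x, 0 < tail μ x) ∧ ∃ M : ℝ, ∀ᶠ x in atTop, tail (mconv μ μ) x ≤ M * tail μ x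

/-- C*(G) = limsup tail(G*G)(x)/tail(G)(x). -/
noncomputable def Cstar (μ : Measure ℝ) : ℝ :=
  atTop.limsup (fun x => tail (mconv μ μ) x / tail μ x)

/-!
Split the indices into blocks `m n < k ≤ (m + 1) n`. Within a block, `F^{*(m+1)n}` is `F^{*k}`
plus at most `n` further summands, each such sum exceeding `-a` with probability `> 1/2`; so
`F̄^{*k}(x) ≤ 2 F̄^{*(m+1)n}(x - a)`. Kesten's bound with long-tailedness (for `x ≥ a`), or
`F̄^{*(m+1)n} ≤ 1 ≤ F̄^{*n}(x) / F̄^{*n}(a)` (for `x < a`), then gives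
`F̄^{*k}(x) ≤ 2 (K C^{m+1} / c + F̄^{*n}(a)⁻¹) F̄^{*n}(x)` with `C = C*(F^{*n}) - 1 + ε₀`.
The hypothesis on `p` makes these block weights summable, so their tail beyond a block `m₀` is
small, whereas `F̄^{*τ} ≥ p_{k₁} F̄^{*k₁} ≥ p_{k₁} c₁ F̄^{*n}` for any `k₁ ≥ n` with `p_{k₁} > 0`.
-/

open scoped Topology

instance (μ ν : Measure ℝ) [IsProbabilityMeasure μ] [IsProbabilityMeasure ν] :
    IsProbabilityMeasure (mconv μ ν) :=
  Measure.isProbabilityMeasure_map measurable_add.aemeasurable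

instance (μ : Measure ℝ) [IsProbabilityMeasure μ] (k : ℕ) :
    IsProbabilityMeasure (nconv μ k) := by
  induction k with
  | zero => exact Measure.dirac.isProbabilityMeasure
  | succ k _ => unfold nconv; infer_instance

lemma mconv_dirac_zero (ν : Measure ℝ) [SFinite ν] : mconv ν (Measure.dirac 0) = ν := by
  unfold mconv
  rw [Measure.prod_dirac, Measure.map_map measurable_add (by fun_prop)]
  simp [Function.comp_def]

lemma mconv_assoc (μ ν ρ : Measure ℝ) [SFinite μ] [SFinite ν] [SFinite ρ] :
    mconv (mconv μ ν) ρ = mconv μ (mconv ν ρ) := by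
  have hl : mconv (mconv μ ν) ρ =
      Measure.map (fun p : (ℝ × ℝ) × ℝ => p.1.1 + p.1.2 + p.2) ((μ.prod ν).prod ρ) := by
    unfold mconv
    nth_rewrite 1 [← Measure.map_id (μ := ρ)]
    rw [Measure.map_prod_map _ _ measurable_add measurable_id,
      Measure.map_map measurable_add (measurable_add.prodMap measurable_id)]
    rfl
  have hr : mconv μ (mconv ν ρ) =
      Measure.map (fun p : ℝ × ℝ × ℝ => p.1 + (p.2.1 + p.2.2)) (μ.prod (ν.prod ρ)) := by
    unfold mconv
    rw [← Measure.map_id (μ := μ), Measure.map_prod_map _ _ measurable_id measurable_add,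
      Measure.map_id, Measure.map_map measurable_add (measurable_id.prodMap measurable_add)]
    rfl
  rw [hl, hr, ← Measure.prodAssoc_prod, Measure.map_map (by fun_prop)
    MeasurableEquiv.prodAssoc.measurable]
  congr 1
  ext p
  simp [MeasurableEquiv.prodAssoc, add_assoc]

lemma nconv_add (μ : Measure ℝ) [IsProbabilityMeasure μ] (a b : ℕ) :
    nconv μ (a + b) = mconv (nconv μ a) (nconv μ b) := by
  induction b with
  | zero => exact (mconv_dirac_zero _).symm
  | succ b ih => rw [← add_assoc, nconv, ih, mconv_assoc, nconv]

lemma tail_nonneg (μ : Measure ℝ) (x : ℝ) : 0 ≤ tail μ x := ENNReal.toReal_nonneg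

lemma tail_le_one (μ : Measure ℝ) [IsProbabilityMeasure μ] (x : ℝ) : tail μ x ≤ 1 :=
  ENNReal.toReal_le_of_le_ofReal zero_le_one (by simpa using prob_le_one)

lemma tail_antitone (μ : Measure ℝ) [IsFiniteMeasure μ] : Antitone (tail μ) := fun _ _ h =>
  ENNReal.toReal_mono (measure_ne_top _ _) (measure_mono (Ioi_subset_Ioi h))

lemma tail_mul_tail_le_tail_mconv (μ ν : Measure ℝ) [IsProbabilityMeasure μ]
    [IsProbabilityMeasure ν] (x a : ℝ) : tail μ (x + a) * tail ν (-a) ≤ tail (mconv μ ν) x := by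
  have hsub : Ioi (x + a) ×ˢ Ioi (-a) ⊆ (fun p : ℝ × ℝ => p.1 + p.2) ⁻¹' Ioi x := by
    rintro ⟨p₁, p₂⟩ ⟨h₁, h₂⟩
    simp only [mem_Ioi, mem_preimage] at *
    linarith
  unfold tail mconv
  rw [← ENNReal.toReal_mul, ← Measure.prod_prod, Measure.map_apply measurable_add measurableSet_Ioi]
  exact ENNReal.toReal_mono (measure_ne_top _ _) (measure_mono hsub)

lemma eventually_half_lt_tail_neg (ν : Measure ℝ) [IsProbabilityMeasure ν] :
    ∀ᶠ b in atTop, 1 / 2 < tail ν (-b) := by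
  have h : Tendsto (ν ∘ Ioi) atBot (𝓝 1) := by
    simpa [iUnion_Ioi] using tendsto_measure_iUnion_atBot (μ := ν) antitone_Ioi
  have h' := (ENNReal.tendsto_toReal ENNReal.one_ne_top).comp (h.comp tendsto_neg_atTop_atBot)
  exact h'.eventually_const_lt (by norm_num)

lemma LongTailed.exists_mul_tail_le_tail_add {G : Measure ℝ} [IsProbabilityMeasure G]
    (hL : LongTailed G) (hpos : ∀ x, 0 < tail G x) (b : ℝ) :
    ∃ c > 0, ∀ x, c * tail G x ≤ tail G (x + b) := by
  obtain ⟨X, hX⟩ := eventually_atTop.1 (hL.eventually_const_lt (by norm_num : (1 : ℝ) / 2 < 1))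
  have hstep : ∀ x, X ≤ x → tail G x / 2 ≤ tail G (x + 1) := fun x hx => by
    have := hX x hx
    rw [lt_div_iff₀ (hpos x)] at this
    linarith
  have hiter : ∀ j : ℕ, ∀ x, X ≤ x → tail G x / 2 ^ j ≤ tail G (x + j) := by
    intro j
    induction j with
    | zero => simp
    | succ j ih =>
      intro x hx
      calc tail G x / 2 ^ (j + 1) = tail G x / 2 ^ j / 2 := by ring
        _ ≤ tail G (x + j) / 2 := by gcongr; exact ih x hx
        _ ≤ tail G (x + j + 1) := hstep _ (by linarith [(Nat.cast_nonneg j : (0 : ℝ) ≤ j)])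
        _ = tail G (x + ↑(j + 1)) := by push_cast; ring_nf
  refine ⟨min (1 / 2 ^ ⌈b⌉₊) (tail G (X + b)), lt_min (by positivity) (hpos _), fun x => ?_⟩
  rcases le_or_gt X x with hx | hx
  · calc min (1 / 2 ^ ⌈b⌉₊) (tail G (X + b)) * tail G x ≤ 1 / 2 ^ ⌈b⌉₊ * tail G x :=
          mul_le_mul_of_nonneg_right (min_le_left _ _) (tail_nonneg _ _)
      _ = tail G x / 2 ^ ⌈b⌉₊ := by ring
      _ ≤ tail G (x + ⌈b⌉₊) := hiter _ x hx
      _ ≤ tail G (x + b) := tail_antitone G (by linarith [Nat.le_ceil b])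
  · calc min (1 / 2 ^ ⌈b⌉₊) (tail G (X + b)) * tail G x ≤ tail G (X + b) * 1 :=
          mul_le_mul (min_le_right _ _) (tail_le_one _ _) (tail_nonneg _ _) (tail_nonneg _ _)
      _ ≤ tail G (x + b) := by rw [mul_one]; exact tail_antitone G (by linarith)

lemma tail_sub_le_of_tail_le {G H : Measure ℝ} [IsFiniteMeasure G] [IsProbabilityMeasure H]
    {a c B : ℝ} (hc : 0 < c) (hB : 0 ≤ B) (hGa : 0 < tail G a)
    (hshift : ∀ x, c * tail G x ≤ tail G (x + a)) (hHG : ∀ x, 0 ≤ x → tail H x ≤ B * tail G x)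
    (x : ℝ) : tail H (x - a) ≤ (B / c + (tail G a)⁻¹) * tail G x := by
  have hGx := tail_nonneg G x
  rw [add_mul]
  rcases le_or_gt a x with hax | hax
  · have hsh : tail G (x - a) ≤ tail G x / c := by
      rw [le_div_iff₀ hc, mul_comm]
      simpa using hshift (x - a)
    calc tail H (x - a) ≤ B * tail G (x - a) := hHG _ (by linarith)
      _ ≤ B / c * tail G x := by
          rw [div_mul_comm, mul_comm (tail G x / c)]; exact mul_le_mul_of_nonneg_left hsh hB
      _ ≤ _ := le_add_of_nonneg_right (by positivity)
  · calc tail H (x - a) ≤ 1 := tail_le_one _ _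
      _ ≤ (tail G a)⁻¹ * tail G x := by
          rw [← div_eq_inv_mul, one_le_div hGa]; exact tail_antitone G hax.le
      _ ≤ _ := le_add_of_nonneg_left (by positivity)

lemma mul_tail_le_tail_sum_smul {μ : ℕ → Measure ℝ} [∀ k, IsProbabilityMeasure (μ k)]
    {p : ℕ → ℝ} (hp0 : ∀ k, 0 ≤ p k) (hp : Summable p) (k : ℕ) (x : ℝ) :
    p k * tail (μ k) x ≤ tail (Measure.sum fun k => ENNReal.ofReal (p k) • μ k) x := by
  have hfin : (Measure.sum fun k => ENNReal.ofReal (p k) • μ k) (Ioi x) ≠ ⊤ := by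
    refine ne_top_of_le_ne_top ENNReal.ofReal_ne_top (?_ : _ ≤ ENNReal.ofReal (∑' k, p k))
    rw [Measure.sum_apply _ measurableSet_Ioi, ENNReal.ofReal_tsum_of_nonneg hp0 hp]
    exact ENNReal.tsum_le_tsum fun k => by simpa using mul_le_of_le_one_right' prob_le_one
  have h := ENNReal.toReal_mono hfin (Measure.le_sum (fun k => ENNReal.ofReal (p k) • μ k) k (Ioi x))
  rwa [Measure.smul_apply, smul_eq_mul, ENNReal.toReal_mul, ENNReal.toReal_ofReal (hp0 k)] at h

section blocks

variable {n : ℕ}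

lemma sum_Ioc_mul_eq_sum_range {M : Type*} [AddCommMonoid M] (f : ℕ → M) (m₀ N : ℕ) :
    ∑ k ∈ Finset.Ioc (m₀ * n) ((m₀ + N) * n), f k =
      ∑ i ∈ Finset.range N, ∑ k ∈ Finset.Ioc ((m₀ + i) * n) ((m₀ + i + 1) * n), f k := by
  induction N with
  | zero => simp
  | succ N ih =>
    rw [Finset.sum_range_succ, ← ih, ← add_assoc,
      Finset.sum_Ioc_consecutive _ (Nat.mul_le_mul_right _ (by omega))
        (Nat.mul_le_mul_right _ (by omega))]

lemma summable_sum_Ioc_mul {f : ℕ → ℝ} (hf0 : ∀ k, 0 ≤ f k) (hf : Summable f) :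
    Summable fun m => ∑ k ∈ Finset.Ioc (m * n) ((m + 1) * n), f k := by
  refine summable_of_sum_range_le (c := ∑' k, f k)
    (fun m => Finset.sum_nonneg fun k _ => hf0 k) fun N => ?_
  have h := sum_Ioc_mul_eq_sum_range (n := n) f 0 N
  simp only [zero_add, zero_mul] at h
  rw [← h]
  exact hf.sum_le_tsum _ fun k _ => hf0 k

lemma tsum_ite_lt_le_tsum_nat_add {f b : ℕ → ℝ} (hn : 1 ≤ n) (hf0 : ∀ k, 0 ≤ f k)
    (hb0 : ∀ m, 0 ≤ b m) (hb : Summable b)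
    (hfb : ∀ m, ∑ k ∈ Finset.Ioc (m * n) ((m + 1) * n), f k ≤ b m) (m₀ : ℕ) :
    ∑' k, (if m₀ * n < k then f k else 0) ≤ ∑' i, b (i + m₀) := by
  refine tsum_le_of_sum_le' (tsum_nonneg fun i => hb0 _) fun s => ?_
  obtain ⟨N, hN⟩ := s.exists_nat_subset_range
  have hsub : s.filter (m₀ * n < ·) ⊆ Finset.Ioc (m₀ * n) ((m₀ + N) * n) := by
    intro k hk
    rw [Finset.mem_filter] at hk
    have := Finset.mem_range.1 (hN hk.1)
    rw [Finset.mem_Ioc]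
    constructor
    · exact hk.2
    · nlinarith
  calc ∑ k ∈ s, (if m₀ * n < k then f k else 0)
      = ∑ k ∈ s.filter (m₀ * n < ·), f k := (Finset.sum_filter _ _).symm
    _ ≤ ∑ k ∈ Finset.Ioc (m₀ * n) ((m₀ + N) * n), f k :=
        Finset.sum_le_sum_of_subset_of_nonneg hsub fun k _ _ => hf0 k
    _ ≤ ∑ i ∈ Finset.range N, b (i + m₀) := by
        rw [sum_Ioc_mul_eq_sum_range]
        exact Finset.sum_le_sum fun i _ => by rw [add_comm i]; exact hfb _
    _ ≤ ∑' i, b (i + m₀) :=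
        ((summable_nat_add_iff m₀).2 hb).sum_le_tsum _ fun i _ => hb0 _

end blocks

section nconv

variable (F : Measure ℝ) [IsProbabilityMeasure F]

lemma exists_half_lt_tail_nconv (n : ℕ) : ∃ a, ∀ j ≤ n, 1 / 2 < tail (nconv F j) (-a) :=
  ((eventually_all_finite (finite_Iic n)).2 fun _ _ => eventually_half_lt_tail_neg _).exists

lemma tail_nconv_le_two_mul {n : ℕ} {a : ℝ} (ha : ∀ j ≤ n, 1 / 2 < tail (nconv F j) (-a))
    {k l : ℕ} (hkl : k ≤ l) (hlk : l ≤ k + n) (x : ℝ) :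
    tail (nconv F k) x ≤ 2 * tail (nconv F l) (x - a) := by
  have h := tail_mul_tail_le_tail_mconv (nconv F k) (nconv F (l - k)) (x - a) a
  rw [sub_add_cancel, ← nconv_add, Nat.add_sub_cancel' hkl] at h
  nlinarith [ha (l - k) (by omega), tail_nonneg (nconv F k) x]

lemma exists_mul_tail_le_tail_nconv {n : ℕ} (hL : LongTailed (nconv F n))
    (hpos : ∀ x, 0 < tail (nconv F n) x) {k : ℕ} (hk : n ≤ k) :
    ∃ c > 0, ∀ x, c * tail (nconv F n) x ≤ tail (nconv F k) x := by
  obtain ⟨b, hb⟩ := (eventually_half_lt_tail_neg (nconv F (k - n))).exists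
  obtain ⟨c, hc, hshift⟩ := hL.exists_mul_tail_le_tail_add hpos b
  refine ⟨c / 2, by positivity, fun x => ?_⟩
  have h := tail_mul_tail_le_tail_mconv (nconv F n) (nconv F (k - n)) x b
  rw [← nconv_add, Nat.add_sub_cancel' hk] at h
  nlinarith [hshift x, tail_nonneg (nconv F n) (x + b), tail_nonneg (nconv F n) x]

lemma tail_nconv_le_of_mem_Ioc {n m k : ℕ} {a c B : ℝ}
    (ha : ∀ j ≤ n, 1 / 2 < tail (nconv F j) (-a)) (hc : 0 < c) (hB : 0 ≤ B)
    (hGa : 0 < tail (nconv F n) a) (hshift : ∀ x, c * tail (nconv F n) x ≤ tail (nconv F n) (x + a))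
    (hHG : ∀ x, 0 ≤ x → tail (nconv F ((m + 1) * n)) x ≤ B * tail (nconv F n) x)
    (hk : k ∈ Finset.Ioc (m * n) ((m + 1) * n)) (x : ℝ) :
    tail (nconv F k) x ≤ 2 * (B / c + (tail (nconv F n) a)⁻¹) * tail (nconv F n) x := by
  rw [Finset.mem_Ioc] at hk
  calc tail (nconv F k) x ≤ 2 * tail (nconv F ((m + 1) * n)) (x - a) :=
        tail_nconv_le_two_mul F ha hk.2 (by rw [add_mul, one_mul]; omega) x
    _ ≤ 2 * ((B / c + (tail (nconv F n) a)⁻¹) * tail (nconv F n) x) := by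
        gcongr
        exact tail_sub_le_of_tail_le hc hB hGa hshift hHG x
    _ = _ := (mul_assoc _ _ _).symm

lemma exists_summable_block_bound {n : ℕ} (hL : LongTailed (nconv F n))
    (hpos : ∀ x, 0 < tail (nconv F n) x) {p : ℕ → ℝ} (hp0 : ∀ k, 0 ≤ p k) (hp : Summable p)
    {K C : ℝ} (hK : 0 ≤ K) (hC : 0 ≤ C)
    (hsum : Summable fun m => (∑ k ∈ Finset.Ioc (m * n) ((m + 1) * n), p k) * C ^ (m + 1))
    (hKb : ∀ m : ℕ, 1 ≤ m → ∀ x : ℝ, 0 ≤ x →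
      tail (nconv F (m * n)) x ≤ K * C ^ m * tail (nconv F n) x) :
    ∃ w : ℕ → ℝ, (∀ m, 0 ≤ w m) ∧ Summable w ∧ ∀ m x,
      ∑ k ∈ Finset.Ioc (m * n) ((m + 1) * n), p k * tail (nconv F k) x ≤
        w m * tail (nconv F n) x := by
  obtain ⟨a, ha⟩ := exists_half_lt_tail_nconv F n
  obtain ⟨c, hc, hshift⟩ := hL.exists_mul_tail_le_tail_add hpos a
  have hKC : ∀ m, 0 ≤ K * C ^ m := fun m => mul_nonneg hK (pow_nonneg hC m)
  refine ⟨fun m => (∑ k ∈ Finset.Ioc (m * n) ((m + 1) * n), p k) *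
      (2 * (K * C ^ (m + 1) / c + (tail (nconv F n) a)⁻¹)), fun m => ?_, ?_, fun m x => ?_⟩
  · exact mul_nonneg (Finset.sum_nonneg fun k _ => hp0 k)
      (mul_nonneg zero_le_two (add_nonneg (div_nonneg (hKC _) hc.le) (inv_nonneg.2 (hpos a).le)))
  · refine ((hsum.mul_left (2 * K / c)).add
      ((summable_sum_Ioc_mul (n := n) hp0 hp).mul_left (2 * (tail (nconv F n) a)⁻¹))).congr
      fun m => ?_
    ring
  · dsimp only
    rw [Finset.sum_mul, Finset.sum_mul]
    refine Finset.sum_le_sum fun k hk => ?_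
    rw [mul_assoc]
    exact mul_le_mul_of_nonneg_left (tail_nconv_le_of_mem_Ioc F ha hc (hKC _) (hpos a) hshift
      (hKb (m + 1) (by omega)) hk x) (hp0 k)

end nconv

theorem stmt16_general (F : Measure ℝ) [IsProbabilityMeasure F] (n : ℕ) (hn : 1 ≤ n)
    (hL : LongTailed (nconv F n)) (hOS : OSClass (nconv F n))
    (p : ℕ → ℝ) (hp0 : ∀ k, 0 ≤ p k) (hpsum : ∑' k, p k = 1)
    (ε₀ : ℝ)
    (hsum : Summable (fun m : ℕ =>
      (∑ k ∈ Finset.Ioc (m * n) ((m + 1) * n), p k) *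
        (Cstar (nconv F n) - 1 + ε₀) ^ (m + 1)))
    (hK : ∃ K > 0, ∀ m : ℕ, 1 ≤ m → ∀ x : ℝ, 0 ≤ x →
      tail (nconv F (m * n)) x ≤
        K * (Cstar (nconv F n) - 1 + ε₀) ^ m * tail (nconv F n) x) :
    ∀ ε : ℝ, 0 < ε → ε < 1 → ∃ M : ℕ, 2 ≤ M ∧ ∀ x : ℝ, 0 ≤ x →
      (∑' k : ℕ, if M ≤ k then p k * tail (nconv F k) x else 0) ≤
        ε * tail (Measure.sum (fun k => ENNReal.ofReal (p k) • nconv F k)) x := by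
  intro ε hε _
  obtain ⟨K, hK0, hKb⟩ := hK
  have hpos : ∀ x, 0 < tail (nconv F n) x := hOS.1
  have hC : 0 < Cstar (nconv F n) - 1 + ε₀ := by
    have h := hKb 1 le_rfl 0 le_rfl
    rw [one_mul, pow_one] at h
    exact pos_of_mul_pos_right (by nlinarith [hpos 0]) hK0.le
  have hp : Summable p := by
    by_contra h
    simp [tsum_eq_zero_of_not_summable h] at hpsum
  by_cases htriv : ∀ k, n < k → p k = 0
  · refine ⟨n + 1, by omega, fun x _ => ?_⟩
    rw [tsum_congr fun k => ite_eq_right_iff.2 fun hk => by rw [htriv k hk, zero_mul], tsum_zero]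
    exact mul_nonneg hε.le (tail_nonneg _ _)
  push Not at htriv
  obtain ⟨k₁, hk₁, hpk₁⟩ := htriv
  replace hpk₁ : 0 < p k₁ := (hp0 k₁).lt_of_ne' hpk₁
  obtain ⟨c₁, hc₁, hlow⟩ := exists_mul_tail_le_tail_nconv F hL hpos hk₁.le
  obtain ⟨w, hw0, hw, hblock⟩ := exists_summable_block_bound F hL hpos hp0 hp hK0.le hC.le hsum hKb
  obtain ⟨m₀, hm₀, hm₀1⟩ := (((tendsto_sum_nat_add w).eventually_lt_const
    (show 0 < ε * (p k₁ * c₁) by positivity)).and (eventually_ge_atTop 1)).exists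
  refine ⟨m₀ * n + 1, by nlinarith, fun x _ => ?_⟩
  calc _ ≤ ∑' i, w (i + m₀) * tail (nconv F n) x :=
        tsum_ite_lt_le_tsum_nat_add hn (fun k => mul_nonneg (hp0 k) (tail_nonneg _ _))
          (fun m => mul_nonneg (hw0 m) (tail_nonneg _ _)) (hw.mul_right _) (hblock · x) m₀
    _ = (∑' i, w (i + m₀)) * tail (nconv F n) x := tsum_mul_right
    _ ≤ ε * (p k₁ * c₁) * tail (nconv F n) x := by gcongr; exact tail_nonneg _ _
    _ = ε * (p k₁ * (c₁ * tail (nconv F n) x)) := by ring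
    _ ≤ ε * (p k₁ * tail (nconv F k₁) x) := by gcongr; exact hlow x
    _ ≤ _ := by gcongr; exact mul_tail_le_tail_sum_smul hp0 hp k₁ x

/-- If F^{*n} is long-tailed and in OS, and the counting variable τ satisfies the
summability condition with base C*(F^{*n}) - 1 + ε₀ (together with the Kesten-type
bound), then for every ε in (0,1) there is M ≥ 2 with
∑_{k ≥ M} p_k tail(F^{*k})(x) ≤ ε tail(F^{*τ})(x) for all x ≥ 0. -/
theorem stmt16 (F : Measure ℝ) [IsProbabilityMeasure F] (n : ℕ) (hn : 1 ≤ n)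
    (hL : LongTailed (nconv F n)) (hOS : OSClass (nconv F n))
    (p : ℕ → ℝ) (hp0 : ∀ k, 0 ≤ p k) (hpsum : ∑' k, p k = 1)
    (ε₀ : ℝ) (hε₀ : 0 < ε₀)
    (hsum : Summable (fun m : ℕ =>
      (∑ k ∈ Finset.Ioc (m * n) ((m + 1) * n), p k) *
        (Cstar (nconv F n) - 1 + ε₀) ^ (m + 1)))
    (hK : ∃ K > 0, ∀ m : ℕ, 1 ≤ m → ∀ x : ℝ, 0 ≤ x →
      tail (nconv F (m * n)) x ≤
        K * (Cstar (nconv F n) - 1 + ε₀) ^ m * tail (nconv F n) x) :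
    ∀ ε : ℝ, 0 < ε → ε < 1 → ∃ M : ℕ, 2 ≤ M ∧ ∀ x : ℝ, 0 ≤ x →
      (∑' k : ℕ, if M ≤ k then p k * tail (nconv F k) x else 0) ≤
        ε * tail (Measure.sum (fun k => ENNReal.ofReal (p k) • nconv F k)) x :=
  stmt16_general F n hn hL hOS p hp0 hpsum ε₀ hsum hK
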